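/- Heine's binomial formula: for any n ∈ ℕ and a ∈ ℂ, the q-shifted factorial satisfies (a;q)_n = Σ_{k=0}^n C(n,k)_q q^{k(k-1)/2} (-1)^k a^k, where C(n,k)_q is the q-binomial coefficient. -/

import Mathlib

open Finset

noncomputable def qNum (q : ℂ) (n : ℕ) : ℂ := (1 - q ^ n) / (1 - q)

noncomputable def qFact (q : ℂ) : ℕ → ℂ
  | 0 => 1
  | n + 1 => qFact q n * qNum q (n + 1)

noncomputable def qExp (q z : ℂ) : ℂ := ∑' n : ℕ, z ^ n / qFact q n

noncomputable def qShift (q a : ℂ) (n : ℕ) : ℂ := ∏ j ∈ Finset.range n, (1 - q ^ j * a)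

noncomputable def qBinom (q : ℂ) (n k : ℕ) : ℂ :=
  qShift q q n / (qShift q q (n - k) * qShift q q k)

/-! Induction on `n`: `(a;q)_{n+1} = (a;q)_n (1 - q ^ n a)`, and multiplying the sum by
`1 - q ^ n a` gives the sum for `n + 1` by the q-Pascal rule
`C(n+1,k+1)_q = C(n,k+1)_q + q ^ (n-k) C(n,k)_q`, the exponent `k (k - 1) / 2` growing by `k`
at each step. Since `C(n,k)_q` is defined as a quotient, all of this needs `q` not to be a root
of unity, which `‖q‖ < 1` guarantees. -/

theorem qShift_zero (q a : ℂ) : qShift q a 0 = 1 := prod_range_zero _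

theorem qShift_succ (q a : ℂ) (n : ℕ) :
    qShift q a (n + 1) = qShift q a n * (1 - q ^ n * a) := prod_range_succ _ _

variable {q : ℂ}

theorem one_sub_pow_ne_zero (hq : ¬IsOfFinOrder q) {n : ℕ} (hn : n ≠ 0) : 1 - q ^ n ≠ 0 :=
  fun h ↦ hq (isOfFinOrder_iff_pow_eq_one.mpr ⟨n, Nat.pos_of_ne_zero hn, (sub_eq_zero.mp h).symm⟩)

theorem qShift_self_ne_zero (hq : ¬IsOfFinOrder q) (n : ℕ) : qShift q q n ≠ 0 :=
  prod_ne_zero_iff.mpr fun j _ ↦ by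
    simpa only [← pow_succ] using one_sub_pow_ne_zero hq j.succ_ne_zero

theorem qShift_self_succ (q : ℂ) (n : ℕ) :
    qShift q q (n + 1) = qShift q q n * (1 - q ^ (n + 1)) := by
  rw [qShift_succ, ← pow_succ]

theorem qBinom_zero_right (hq : ¬IsOfFinOrder q) (n : ℕ) : qBinom q n 0 = 1 := by
  rw [qBinom, Nat.sub_zero, qShift_zero, mul_one, div_self (qShift_self_ne_zero hq n)]

theorem qBinom_self (hq : ¬IsOfFinOrder q) (n : ℕ) : qBinom q n n = 1 := by
  rw [qBinom, Nat.sub_self, qShift_zero, one_mul, div_self (qShift_self_ne_zero hq n)]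

theorem qBinom_succ_succ (hq : ¬IsOfFinOrder q) {n k : ℕ} (hk : k < n) :
    qBinom q (n + 1) (k + 1) = qBinom q n (k + 1) + q ^ (n - k) * qBinom q n k := by
  obtain ⟨m, rfl⟩ := Nat.exists_eq_add_of_lt hk
  rw [qBinom, qBinom, qBinom, show k + m + 1 + 1 - (k + 1) = m + 1 by omega,
    show k + m + 1 - (k + 1) = m by omega, show k + m + 1 - k = m + 1 by omega,
    qShift_self_succ q (k + m + 1), qShift_self_succ q m, qShift_self_succ q k]
  have := qShift_self_ne_zero hq m
  have := qShift_self_ne_zero hq k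
  have := one_sub_pow_ne_zero hq m.succ_ne_zero
  have := one_sub_pow_ne_zero hq k.succ_ne_zero
  field_simp
  ring

noncomputable def heineTerm (q a : ℂ) (n k : ℕ) : ℂ :=
  qBinom q n k * q ^ (k * (k - 1) / 2) * (-1) ^ k * a ^ k

theorem heineTerm_zero_right (hq : ¬IsOfFinOrder q) (a : ℂ) (n : ℕ) : heineTerm q a n 0 = 1 := by
  simp [heineTerm, qBinom_zero_right hq]

theorem heineTerm_succ_self (hq : ¬IsOfFinOrder q) (a : ℂ) (n : ℕ) :
    heineTerm q a (n + 1) (n + 1) = -(q ^ n * a * heineTerm q a n n) := by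
  simp only [heineTerm, qBinom_self hq, Nat.triangle_succ, pow_add, pow_succ]
  ring

theorem heineTerm_succ_succ (hq : ¬IsOfFinOrder q) (a : ℂ) {n k : ℕ} (hk : k < n) :
    heineTerm q a (n + 1) (k + 1) = heineTerm q a n (k + 1) - q ^ n * a * heineTerm q a n k := by
  have hn : q ^ n = q ^ (n - k) * q ^ k := by rw [← pow_add, Nat.sub_add_cancel hk.le]
  simp only [heineTerm, qBinom_succ_succ hq hk, Nat.triangle_succ, hn, pow_add, pow_succ]
  ring

theorem sum_heineTerm_succ (hq : ¬IsOfFinOrder q) (a : ℂ) (n : ℕ) :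
    ∑ k ∈ range (n + 2), heineTerm q a (n + 1) k =
      (∑ k ∈ range (n + 1), heineTerm q a n k) * (1 - q ^ n * a) := by
  have hsucc : ∑ k ∈ range (n + 1), heineTerm q a n k =
      ∑ k ∈ range n, heineTerm q a n (k + 1) + 1 := by
    rw [sum_range_succ', heineTerm_zero_right hq]
  rw [sum_range_succ', sum_range_succ, sum_congr rfl fun k hk ↦
    heineTerm_succ_succ hq a (mem_range.mp hk), sum_sub_distrib, ← mul_sum,
    heineTerm_succ_self hq, heineTerm_zero_right hq]
  linear_combination -hsucc + q ^ n * a * sum_range_succ (heineTerm q a n) n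

/-- Heine's binomial formula. -/
theorem heine_binomial (q a : ℂ) (hq : ‖q‖ < 1) (n : ℕ) :
    qShift q a n =
      ∑ k ∈ Finset.range (n + 1),
        qBinom q n k * q ^ (k * (k - 1) / 2) * (-1) ^ k * a ^ k := by
  have hq : ¬IsOfFinOrder q := fun h ↦ hq.ne h.norm_eq_one
  change qShift q a n = ∑ k ∈ range (n + 1), heineTerm q a n k
  induction n with
  | zero => simp [qShift_zero, heineTerm_zero_right hq]
  | succ n ih => rw [qShift_succ, ih, sum_heineTerm_succ hq]
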